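/- arXiv:2308.14071 — 2 statements merged into one kernel-verified Lean document; each statement's English description precedes it below -/
import Mathlib

section
/- (Proposition 1) Let x* be a 1-2-1 feasible schedule (M = 1) with x*_p > 0 for every p ∈ 𝒫. For each path p, let θ̃_p = min over links (i,j) of p of θ_{ji} and λ̃_p = max over links (i,j) of p of λ_{ji}(x*). Then the 1-2-1 passive capacity satisfies C ≥ Σ_{p∈𝒫} min( x*_p , θ̃_p·x*_p/λ̃_p )·C_p. -/
/-!
Common formalization of 1-2-1 mmWave networks (Dogan–Cardone–Fragouli).
A link is a directed edge `(i, j)` between natural-number node labels.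
A path is identified with its (finite, nonempty) set of links.
-/

open Finset

abbrev Link := ℕ × ℕ

/-- Minimum of `f` over a finite set of links (0 on the empty set). -/
noncomputable def pathInf (f : Link → ℝ) (p : Finset Link) : ℝ :=
  if h : p.Nonempty then p.inf' h f else 0

/-- Maximum of `f` over a finite set of links (0 on the empty set). -/
noncomputable def pathSup (f : Link → ℝ) (p : Finset Link) : ℝ :=
  if h : p.Nonempty then p.sup' h f else 0

/-- Capacity of a path: the minimum link capacity along it. -/
noncomputable def pathCap (ℓ : Link → ℝ) : Finset Link → ℝ := pathInf ℓ

/-- Induced activation time `λ_{ji}(x)` of link `e`. -/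
noncomputable def linkTime (ℓ : Link → ℝ) (Ps : Finset (Finset Link))
    (x : Finset Link → ℝ) (e : Link) : ℝ :=
  ∑ p ∈ Ps with e ∈ p, x p * pathCap ℓ p / ℓ e

/-- Rate of a schedule `x`. -/
noncomputable def netRate (ℓ : Link → ℝ) (Ps : Finset (Finset Link))
    (x : Finset Link → ℝ) : ℝ :=
  ∑ p ∈ Ps, x p * pathCap ℓ p

/-- 1-2-1 feasibility for `M = 1`: a nonnegative schedule whose induced link
activation times sum to at most 1 on the links leaving (resp. entering) each node. -/
def Feasible1 (E : Finset Link) (ℓ : Link → ℝ) (Ps : Finset (Finset Link))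
    (x : Finset Link → ℝ) : Prop :=
  (∀ p ∈ Ps, 0 ≤ x p) ∧
  (∀ i : ℕ, ∑ e ∈ E with e.1 = i, linkTime ℓ Ps x e ≤ 1) ∧
  (∀ i : ℕ, ∑ e ∈ E with e.2 = i, linkTime ℓ Ps x e ≤ 1)

/-- The passive-user constraint: every link activation time is below its threshold. -/
def PassiveOK (E : Finset Link) (ℓ : Link → ℝ) (Ps : Finset (Finset Link))
    (θ : Link → ℝ) (x : Finset Link → ℝ) : Prop :=
  ∀ e ∈ E, linkTime ℓ Ps x e ≤ θ e

/-- The 1-2-1 passive capacity: supremum of rates of feasible schedules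
satisfying the passive-user constraint. -/
noncomputable def passiveCapacity (E : Finset Link) (ℓ : Link → ℝ)
    (Ps : Finset (Finset Link)) (θ : Link → ℝ) : ℝ :=
  sSup {r | ∃ x, Feasible1 E ℓ Ps x ∧ PassiveOK E ℓ Ps θ x ∧ netRate ℓ Ps x = r}

/-- The approximate capacity: supremum of rates of feasible schedules. -/
noncomputable def approxCapacity (E : Finset Link) (ℓ : Link → ℝ)
    (Ps : Finset (Finset Link)) : ℝ :=
  sSup {r | ∃ x, Feasible1 E ℓ Ps x ∧ netRate ℓ Ps x = r}

/-- The schedule `x̂_p = min(x*_p, θ̃_p x*_p / λ̃_p)`, where `θ̃_p` is the minimum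
threshold over the links of `p` and `λ̃_p` the maximum activation time `λ_{ji}(x*)`
over the links of `p`. -/
noncomputable def xhat (ℓ θ : Link → ℝ) (Ps : Finset (Finset Link))
    (x : Finset Link → ℝ) (p : Finset Link) : ℝ :=
  min (x p) (pathInf θ p * x p / pathSup (linkTime ℓ Ps x) p)

/-!
Shrinking every path of a feasible schedule keeps it feasible, and the factor
`θ̃_p / λ̃_p` is small enough on every path through a link `e` to bring `λ_e` down
to `θ_e`: on such a path `θ̃_p / λ̃_p ≤ θ_e / λ_e(x*)`, and `λ_e` is linear in the
schedule. So `x̂` is a passive-feasible schedule, and its rate bounds the capacity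
from below once the set of passive-feasible rates is known to be bounded, which
follows from double counting: the rate is at most `Σ_e ℓ_e λ_e ≤ Σ_e ℓ_e θ_e`.
-/

section PathExtrema

variable {f : Link → ℝ} {p : Finset Link} {e : Link}

lemma pathInf_le_of_mem (he : e ∈ p) : pathInf f p ≤ f e := by
  rw [pathInf, dif_pos ⟨e, he⟩]
  exact inf'_le f he

lemma le_pathSup_of_mem (he : e ∈ p) : f e ≤ pathSup f p := by
  rw [pathSup, dif_pos ⟨e, he⟩]
  exact le_sup' f he

lemma pathInf_nonneg (hf : ∀ e ∈ p, 0 ≤ f e) : 0 ≤ pathInf f p := by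
  unfold pathInf
  split_ifs with hp
  · exact le_inf' hp f hf
  · exact le_rfl

lemma pathSup_nonneg (hf : ∀ e ∈ p, 0 ≤ f e) : 0 ≤ pathSup f p := by
  rcases p.eq_empty_or_nonempty with rfl | ⟨e, he⟩
  · simp [pathSup]
  · exact (hf e he).trans (le_pathSup_of_mem he)

end PathExtrema

section Schedules

variable {E : Finset Link} {ℓ θ : Link → ℝ} {Ps : Finset (Finset Link)}
  {x y : Finset Link → ℝ} {e : Link}

lemma pathCap_nonneg {p : Finset Link} (hℓ : ∀ e ∈ E, 0 ≤ ℓ e) (hp : p ⊆ E) :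
    0 ≤ pathCap ℓ p :=
  pathInf_nonneg fun e he => hℓ e (hp he)

lemma linkTime_nonneg (he : 0 ≤ ℓ e) (hC : ∀ p ∈ Ps, 0 ≤ pathCap ℓ p)
    (hx : ∀ p ∈ Ps, 0 ≤ x p) : 0 ≤ linkTime ℓ Ps x e :=
  sum_nonneg fun p hp =>
    have hp := (mem_filter.mp hp).1
    div_nonneg (mul_nonneg (hx p hp) (hC p hp)) he

lemma linkTime_le_mul_of_le (he : 0 ≤ ℓ e) (hC : ∀ p ∈ Ps, 0 ≤ pathCap ℓ p) (c : ℝ)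
    (hyx : ∀ p ∈ Ps, e ∈ p → y p ≤ c * x p) :
    linkTime ℓ Ps y e ≤ c * linkTime ℓ Ps x e := by
  rw [linkTime, linkTime, mul_sum]
  refine sum_le_sum fun p hp => ?_
  obtain ⟨hp, hep⟩ := mem_filter.mp hp
  have := hC p hp
  calc y p * pathCap ℓ p / ℓ e ≤ c * x p * pathCap ℓ p / ℓ e := by gcongr; exact hyx p hp hep
    _ = c * (x p * pathCap ℓ p / ℓ e) := by ring

lemma linkTime_mono (he : 0 ≤ ℓ e) (hC : ∀ p ∈ Ps, 0 ≤ pathCap ℓ p)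
    (hyx : ∀ p ∈ Ps, y p ≤ x p) : linkTime ℓ Ps y e ≤ linkTime ℓ Ps x e := by
  simpa using linkTime_le_mul_of_le he hC 1 fun p hp _ => by simpa using hyx p hp

lemma Feasible1.mono (hx : Feasible1 E ℓ Ps x) (hℓ : ∀ e ∈ E, 0 ≤ ℓ e)
    (hC : ∀ p ∈ Ps, 0 ≤ pathCap ℓ p) (hy : ∀ p ∈ Ps, 0 ≤ y p) (hyx : ∀ p ∈ Ps, y p ≤ x p) :
    Feasible1 E ℓ Ps y := by
  have hle : ∀ s ⊆ E, ∑ e ∈ s, linkTime ℓ Ps y e ≤ ∑ e ∈ s, linkTime ℓ Ps x e :=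
    fun s hs => sum_le_sum fun e he => linkTime_mono (hℓ e (hs he)) hC hyx
  exact ⟨hy, fun i => (hle _ (filter_subset _ _)).trans (hx.2.1 i),
    fun i => (hle _ (filter_subset _ _)).trans (hx.2.2 i)⟩

lemma xhat_le (p : Finset Link) : xhat ℓ θ Ps x p ≤ x p :=
  min_le_left _ _

lemma xhat_nonneg {p : Finset Link} (hxp : 0 ≤ x p) (hθ : ∀ e ∈ p, 0 ≤ θ e)
    (ht : ∀ e ∈ p, 0 ≤ linkTime ℓ Ps x e) : 0 ≤ xhat ℓ θ Ps x p :=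
  le_min hxp (div_nonneg (mul_nonneg (pathInf_nonneg hθ) hxp) (pathSup_nonneg ht))

lemma xhat_le_mul_of_mem {p : Finset Link} (hep : e ∈ p) (hxp : 0 ≤ x p) (hθe : 0 ≤ θ e)
    (hte : 0 < linkTime ℓ Ps x e) :
    xhat ℓ θ Ps x p ≤ θ e / linkTime ℓ Ps x e * x p :=
  calc xhat ℓ θ Ps x p ≤ pathInf θ p * x p / pathSup (linkTime ℓ Ps x) p := min_le_right _ _
    _ ≤ θ e * x p / linkTime ℓ Ps x e :=
      div_le_div₀ (mul_nonneg hθe hxp) (by gcongr; exact pathInf_le_of_mem hep) hte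
        (le_pathSup_of_mem hep)
    _ = θ e / linkTime ℓ Ps x e * x p := by ring

lemma passiveOK_xhat (hℓ : ∀ e ∈ E, 0 ≤ ℓ e) (hC : ∀ p ∈ Ps, 0 ≤ pathCap ℓ p)
    (hθ : ∀ e ∈ E, 0 ≤ θ e) (hx : ∀ p ∈ Ps, 0 ≤ x p) :
    PassiveOK E ℓ Ps θ (xhat ℓ θ Ps x) := by
  intro e he
  rcases (linkTime_nonneg (hℓ e he) hC hx).eq_or_lt with ht | ht
  · calc linkTime ℓ Ps (xhat ℓ θ Ps x) e ≤ linkTime ℓ Ps x e :=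
          linkTime_mono (hℓ e he) hC fun p _ => xhat_le p
      _ = 0 := ht.symm
      _ ≤ θ e := hθ e he
  · calc linkTime ℓ Ps (xhat ℓ θ Ps x) e
        ≤ θ e / linkTime ℓ Ps x e * linkTime ℓ Ps x e :=
          linkTime_le_mul_of_le (hℓ e he) hC _ fun p hp hep =>
            xhat_le_mul_of_mem hep (hx p hp) (hθ e he) ht
      _ = θ e := div_mul_cancel₀ _ ht.ne'

lemma netRate_le_sum_mul_linkTime (hℓ : ∀ e ∈ E, 0 < ℓ e)
    (hpaths : ∀ p ∈ Ps, p.Nonempty ∧ p ⊆ E) (hx : ∀ p ∈ Ps, 0 ≤ x p) :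
    netRate ℓ Ps x ≤ ∑ e ∈ E, ℓ e * linkTime ℓ Ps x e := by
  have hC p hp := pathCap_nonneg (fun e he => (hℓ e he).le) (hpaths p hp).2
  calc netRate ℓ Ps x ≤ ∑ p ∈ Ps, ∑ _e ∈ p, x p * pathCap ℓ p := by
        refine sum_le_sum fun p hp => ?_
        rw [sum_const, nsmul_eq_mul]
        exact le_mul_of_one_le_left (mul_nonneg (hx p hp) (hC p hp))
          (Nat.one_le_cast.mpr (hpaths p hp).1.card_pos)
    _ = ∑ e ∈ E, ∑ p ∈ Ps with e ∈ p, x p * pathCap ℓ p :=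
        sum_comm' fun p e => by
          simpa [and_comm] using fun hep hp => (hpaths p hp).2 hep
    _ = ∑ e ∈ E, ℓ e * linkTime ℓ Ps x e := by
        refine sum_congr rfl fun e he => ?_
        rw [linkTime, mul_sum]
        exact sum_congr rfl fun p _ => (mul_div_cancel₀ _ (hℓ e he).ne').symm

lemma le_passiveCapacity (hℓ : ∀ e ∈ E, 0 < ℓ e) (hpaths : ∀ p ∈ Ps, p.Nonempty ∧ p ⊆ E)
    (hy : Feasible1 E ℓ Ps y) (hyθ : PassiveOK E ℓ Ps θ y) :
    netRate ℓ Ps y ≤ passiveCapacity E ℓ Ps θ := by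
  refine le_csSup ⟨∑ e ∈ E, ℓ e * θ e, ?_⟩ ⟨y, hy, hyθ, rfl⟩
  rintro r ⟨z, hz, hzθ, rfl⟩
  exact (netRate_le_sum_mul_linkTime hℓ hpaths hz.1).trans
    (sum_le_sum fun e he => mul_le_mul_of_nonneg_left (hzθ e he) (hℓ e he).le)

end Schedules

theorem stmt5_general (E : Finset Link) (ℓ θ : Link → ℝ)
    (hℓ : ∀ e ∈ E, 0 < ℓ e) (Ps : Finset (Finset Link))
    (hpaths : ∀ p ∈ Ps, p.Nonempty ∧ p ⊆ E)
    (hθ : ∀ e ∈ E, 0 ≤ θ e ∧ θ e ≤ 1)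
    (x : Finset Link → ℝ) (hx : Feasible1 E ℓ Ps x) :
    passiveCapacity E ℓ Ps θ ≥ ∑ p ∈ Ps, xhat ℓ θ Ps x p * pathCap ℓ p := by
  have hℓ₀ e he : 0 ≤ ℓ e := (hℓ e he).le
  have hθ₀ e he : 0 ≤ θ e := (hθ e he).1
  have hC p hp : 0 ≤ pathCap ℓ p := pathCap_nonneg hℓ₀ (hpaths p hp).2
  have hxhat p hp : 0 ≤ xhat ℓ θ Ps x p :=
    xhat_nonneg (hx.1 p hp) (fun e he => hθ₀ e ((hpaths p hp).2 he))
      fun e he => linkTime_nonneg (hℓ₀ e ((hpaths p hp).2 he)) hC hx.1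
  exact le_passiveCapacity hℓ hpaths (hx.mono hℓ₀ hC hxhat fun p _ => xhat_le p)
    (passiveOK_xhat hℓ₀ hC hθ₀ hx.1)

/-- Proposition 1: the 1-2-1 passive capacity is at least
`Σ_p min(x*_p, θ̃_p x*_p / λ̃_p) C_p`. -/
theorem stmt5 (E : Finset Link) (hE : E.Nonempty) (ℓ θ : Link → ℝ)
    (hℓ : ∀ e ∈ E, 0 < ℓ e) (Ps : Finset (Finset Link)) (hPs : Ps.Nonempty)
    (hpaths : ∀ p ∈ Ps, p.Nonempty ∧ p ⊆ E)
    (hθ : ∀ e ∈ E, 0 ≤ θ e ∧ θ e ≤ 1)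
    (x : Finset Link → ℝ) (hx : Feasible1 E ℓ Ps x)
    (hxpos : ∀ p ∈ Ps, 0 < x p) :
    passiveCapacity E ℓ Ps θ ≥ ∑ p ∈ Ps, xhat ℓ θ Ps x p * pathCap ℓ p :=
  stmt5_general E ℓ θ hℓ Ps hpaths hθ x hx
end

section
/- (Theorem 2, second part, M = 1) Assume unit link capacities (ℓ_{ji} = 1 for every link, so C_p = 1 for every path) and per-link thresholds θ_{ji} ∈ [0,1]. Let p_1, …, p_{H_e} ∈ 𝒫 be pairwise link-disjoint source–destination paths with H_e ≥ 1, and for each k let θ_{p_k} = min over links (i,j) of p_k of θ_{ji}. Then the schedule assigning activation time min(1/H_e, θ_{p_k}) to each p_k and 0 to every other path is 1-2-1 feasible (M = 1), satisfies the passive-user constraint, and has rate Σ_{k=1}^{H_e} min(1/H_e, θ_{p_k}). -/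
/-!
Common formalization of 1-2-1 mmWave networks (Dogan–Cardone–Fragouli).
A link is a directed edge `(i, j)` between natural-number node labels.
A path is identified with its (finite, nonempty) set of links.
-/

open Finset

/-!
With unit capacities the activation time of a link is the total activation time of the
chosen paths through it. Disjointness leaves at most one chosen path through each link, and its
time `min (1 / H_e) θ_{p_k}` is at most the link's threshold. A simple path uses at most one link
leaving and one link entering each node, so the load of a node is at most `Σ_k 1 / H_e = 1`.
-/

open Function

theorem pathInf_le {f : Link → ℝ} {q : Finset Link} {e : Link} (he : e ∈ q) :
    pathInf f q ≤ f e := by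
  rw [pathInf, dif_pos ⟨e, he⟩]
  exact inf'_le f he

theorem le_pathInf {f : Link → ℝ} {q : Finset Link} {c : ℝ} (hq : q.Nonempty)
    (h : ∀ e ∈ q, c ≤ f e) : c ≤ pathInf f q := by
  rw [pathInf, dif_pos hq]
  exact le_inf' hq f h

theorem pathCap_eq_one {ℓ : Link → ℝ} {q : Finset Link} (hq : q.Nonempty)
    (h : ∀ e ∈ q, ℓ e = 1) : pathCap ℓ q = 1 :=
  le_antisymm (h _ hq.choose_spec ▸ pathInf_le hq.choose_spec)
    (le_pathInf hq fun e he => (h e he).ge)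

section UnitCapacity

variable {E : Finset Link} {ℓ : Link → ℝ} {Ps : Finset (Finset Link)}

theorem linkTime_eq_sum_of_unit (hℓ : ∀ e ∈ E, ℓ e = 1)
    (hpaths : ∀ q ∈ Ps, q.Nonempty ∧ q ⊆ E) (x : Finset Link → ℝ) {e : Link} (he : e ∈ E) :
    linkTime ℓ Ps x e = ∑ q ∈ Ps with e ∈ q, x q := by
  refine sum_congr rfl fun q hq => ?_
  have hq := hpaths q (mem_filter.mp hq).1
  rw [pathCap_eq_one hq.1 fun e he => hℓ e (hq.2 he), hℓ e he, mul_one, div_one]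

theorem netRate_eq_sum_of_unit (hℓ : ∀ e ∈ E, ℓ e = 1)
    (hpaths : ∀ q ∈ Ps, q.Nonempty ∧ q ⊆ E) (x : Finset Link → ℝ) :
    netRate ℓ Ps x = ∑ q ∈ Ps, x q := by
  refine sum_congr rfl fun q hq => ?_
  have hq := hpaths q hq
  rw [pathCap_eq_one hq.1 fun e he => hℓ e (hq.2 he), mul_one]

end UnitCapacity

section PathFamily

variable {ι : Type*} [Fintype ι] {p : ι → Finset Link}

theorem sum_eq_sum_of_support_range (hinj : Injective p) {x : Finset Link → ℝ} {w : ι → ℝ}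
    (hx : ∀ k, x (p k) = w k) (hx0 : ∀ q ∉ Set.range p, x q = 0) (S : Finset (Finset Link)) :
    ∑ q ∈ S, x q = ∑ k with p k ∈ S, w k := by
  symm
  refine sum_of_injOn p hinj.injOn (fun k hk => (mem_filter.mp hk).2) ?_ fun k _ => (hx k).symm
  intro q hq hq'
  refine hx0 q ?_
  rintro ⟨k, rfl⟩
  exact hq' ⟨k, mem_filter.mpr ⟨mem_univ k, hq⟩, rfl⟩

omit [Fintype ι] in
theorem nonneg_of_support_range {x : Finset Link → ℝ} {w : ι → ℝ} (hx : ∀ k, x (p k) = w k)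
    (hx0 : ∀ q ∉ Set.range p, x q = 0) (hw : ∀ k, 0 ≤ w k) (q : Finset Link) : 0 ≤ x q := by
  by_cases hq : q ∈ Set.range p
  · obtain ⟨k, rfl⟩ := hq
    exact (hx k).symm ▸ hw k
  · exact (hx0 q hq).symm.le

theorem sum_filter_sum_mem_le_sum {m : ι → ℝ} (hm : ∀ k, 0 ≤ m k) (A : Finset Link)
    (P : Link → Prop) [DecidablePred P] (hP : ∀ k, #{e ∈ p k | P e} ≤ 1) :
    ∑ e ∈ A with P e, ∑ k with e ∈ p k, m k ≤ ∑ k, m k := by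
  calc ∑ e ∈ A with P e, ∑ k with e ∈ p k, m k = ∑ k, #{e ∈ A | P e ∧ e ∈ p k} • m k := by
        rw [sum_comm' (t' := univ) (s' := fun k => {e ∈ A | P e ∧ e ∈ p k}) fun e k => by
          simp only [mem_filter, mem_univ, true_and, and_true, and_assoc]]
        simp only [sum_const]
    _ ≤ ∑ k, m k := sum_le_sum fun k _ => by
        have hcard : #{e ∈ A | P e ∧ e ∈ p k} ≤ 1 :=
          (card_le_card fun e he => by simp_all).trans (hP k)
        rw [nsmul_eq_mul]
        exact mul_le_of_le_one_left (hm k) (by exact_mod_cast hcard)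

theorem sum_mem_le_of_pairwise_disjoint (hdisj : Pairwise (Disjoint on p))
    {m : ι → ℝ} {e : Link} {c : ℝ} (hc : 0 ≤ c) (hm : ∀ k, e ∈ p k → m k ≤ c) :
    ∑ k with e ∈ p k, m k ≤ c := by
  have hcard : #{k | e ∈ p k} ≤ 1 := card_le_one.mpr fun k hk l hl => by
    by_contra hkl
    exact disjoint_left.mp (hdisj hkl) (mem_filter.mp hk).2 (mem_filter.mp hl).2
  calc ∑ k with e ∈ p k, m k ≤ #{k | e ∈ p k} • c :=
        sum_le_card_nsmul _ _ _ fun k hk => hm k (mem_filter.mp hk).2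
    _ ≤ c := by
        rw [nsmul_eq_mul]
        exact mul_le_of_le_one_left hc (by exact_mod_cast hcard)

theorem sum_le_one_of_le_inv_card {m : ι → ℝ} (hm : ∀ k, m k ≤ 1 / Fintype.card ι) :
    ∑ k, m k ≤ 1 := by
  refine (sum_le_card_nsmul _ _ _ fun k _ => hm k).trans ?_
  rw [card_univ, nsmul_eq_mul, mul_one_div]
  exact div_self_le_one _

end PathFamily

theorem stmt13_general (E : Finset Link) (ℓ θ : Link → ℝ)
    (hℓ : ∀ e ∈ E, ℓ e = 1) (Ps : Finset (Finset Link))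
    (hpaths : ∀ q ∈ Ps, q.Nonempty ∧ q ⊆ E)
    (hsimple : ∀ q ∈ Ps, ∀ i : ℕ,
      ({e ∈ q | e.1 = i}).card ≤ 1 ∧ ({e ∈ q | e.2 = i}).card ≤ 1)
    (hθ : ∀ e ∈ E, 0 ≤ θ e ∧ θ e ≤ 1)
    (He : ℕ) (p : Fin He → Finset Link)
    (hpPs : ∀ k, p k ∈ Ps) (hinj : Function.Injective p)
    (hdisj : ∀ k l, k ≠ l → Disjoint (p k) (p l)) :
    Feasible1 E ℓ Ps
      (fun q => if ∃ k, q = p k then min (1 / (He : ℝ)) (pathInf θ q) else 0) ∧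
    PassiveOK E ℓ Ps θ
      (fun q => if ∃ k, q = p k then min (1 / (He : ℝ)) (pathInf θ q) else 0) ∧
    netRate ℓ Ps
      (fun q => if ∃ k, q = p k then min (1 / (He : ℝ)) (pathInf θ q) else 0)
      = ∑ k : Fin He, min (1 / (He : ℝ)) (pathInf θ (p k)) := by
  set x : Finset Link → ℝ :=
    fun q => if ∃ k, q = p k then min (1 / (He : ℝ)) (pathInf θ q) else 0
  set w : Fin He → ℝ := fun k => min (1 / (He : ℝ)) (pathInf θ (p k))
  have hx : ∀ k, x (p k) = w k := fun k => if_pos ⟨k, rfl⟩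
  have hx0 : ∀ q ∉ Set.range p, x q = 0 := fun q hq => if_neg fun ⟨k, hk⟩ => hq ⟨k, hk.symm⟩
  have hw0 : ∀ k, 0 ≤ w k := fun k => le_min (by positivity) <|
    le_pathInf (hpaths _ (hpPs k)).1 fun e he => (hθ e ((hpaths _ (hpPs k)).2 he)).1
  have hlt : ∀ e ∈ E, linkTime ℓ Ps x e = ∑ k with e ∈ p k, w k := fun e he => by
    rw [linkTime_eq_sum_of_unit hℓ hpaths x he, sum_eq_sum_of_support_range hinj hx hx0]
    simp only [mem_filter, hpPs, true_and]
  have hnode : ∀ (P : Link → Prop) [DecidablePred P], (∀ k, #{e ∈ p k | P e} ≤ 1) →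
      ∑ e ∈ E with P e, linkTime ℓ Ps x e ≤ 1 := fun P _ hP => by
    rw [sum_congr rfl fun e he => hlt e (mem_filter.mp he).1]
    refine (sum_filter_sum_mem_le_sum hw0 E P hP).trans (sum_le_one_of_le_inv_card fun k => ?_)
    exact (min_le_left _ _).trans_eq (by rw [Fintype.card_fin])
  refine ⟨⟨fun q _ => nonneg_of_support_range hx hx0 hw0 q,
    fun i => hnode _ fun k => (hsimple _ (hpPs k) i).1,
    fun i => hnode _ fun k => (hsimple _ (hpPs k) i).2⟩, fun e he => ?_, ?_⟩
  · rw [hlt e he]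
    exact sum_mem_le_of_pairwise_disjoint hdisj (hθ e he).1 fun k hk =>
      (min_le_right _ _).trans (pathInf_le hk)
  · rw [netRate_eq_sum_of_unit hℓ hpaths, sum_eq_sum_of_support_range hinj hx hx0,
      filter_true_of_mem fun k _ => hpPs k]

/-- Theorem 2, second part, M = 1: with unit link capacities, given `H_e`
pairwise link-disjoint paths, the schedule giving path `p_k` activation time
`min(1/H_e, θ_{p_k})` (where `θ_{p_k}` is the minimum threshold over the links of `p_k`)
is 1-2-1 feasible, satisfies the passive-user constraint, and has rate
`Σ_k min(1/H_e, θ_{p_k})`. -/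
theorem stmt13 (E : Finset Link) (hE : E.Nonempty) (ℓ θ : Link → ℝ)
    (hℓ : ∀ e ∈ E, ℓ e = 1) (Ps : Finset (Finset Link)) (hPs : Ps.Nonempty)
    (hpaths : ∀ q ∈ Ps, q.Nonempty ∧ q ⊆ E)
    (hsimple : ∀ q ∈ Ps, ∀ i : ℕ,
      ({e ∈ q | e.1 = i}).card ≤ 1 ∧ ({e ∈ q | e.2 = i}).card ≤ 1)
    (hθ : ∀ e ∈ E, 0 ≤ θ e ∧ θ e ≤ 1)
    (He : ℕ) (hHe : 0 < He) (p : Fin He → Finset Link)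
    (hpPs : ∀ k, p k ∈ Ps) (hinj : Function.Injective p)
    (hdisj : ∀ k l, k ≠ l → Disjoint (p k) (p l)) :
    Feasible1 E ℓ Ps
      (fun q => if ∃ k, q = p k then min (1 / (He : ℝ)) (pathInf θ q) else 0) ∧
    PassiveOK E ℓ Ps θ
      (fun q => if ∃ k, q = p k then min (1 / (He : ℝ)) (pathInf θ q) else 0) ∧
    netRate ℓ Ps
      (fun q => if ∃ k, q = p k then min (1 / (He : ℝ)) (pathInf θ q) else 0)
      = ∑ k : Fin He, min (1 / (He : ℝ)) (pathInf θ (p k)) :=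
  stmt13_general E ℓ θ hℓ Ps hpaths hsimple hθ He p hpPs hinj hdisj
end
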